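/- Let a simplified (κ,2)-morass be given. Then: (a) for all ζ < ξ ≤ κ⁺, id↾φ_ζ ∈ G_{ζξ}; (b) for all α < β ≤ κ there is an embedding g ∈ F_{αβ} such that g↾θ_α = id↾θ_α. -/

import Mathlib

noncomputable section

open Cardinal Set

/-- A simplified `(κ,1)`-morass (Velleman).  Morass maps are coded as total functions on
ordinals; all axioms only constrain their values below the relevant `θ α`. -/
structure SimplifiedMorass : Type 2 where
  κ : Cardinal.{0}
  kappa_reg : κ.IsRegular
  kappa_unc : Cardinal.aleph0 < κ
  θ : Ordinal.{0} → Ordinal.{0}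
  F : Ordinal.{0} → Ordinal.{0} → Set (Ordinal.{0} → Ordinal.{0})
  /-- (P0)(a) `θ 0 = 1` -/
  theta_zero : θ 0 = 1
  /-- (P0)(a) `θ κ = κ⁺` -/
  theta_top : θ κ.ord = (Order.succ κ).ord
  /-- (P0)(a) `0 < θ α` for `α < κ` -/
  theta_pos : ∀ α, α < κ.ord → 0 < θ α
  /-- (P0)(a) `θ α < κ` for `α < κ` -/
  theta_lt : ∀ α, α < κ.ord → θ α < κ.ord
  /-- (P0)(b) every `f ∈ F α β` is an order preserving map `θ α → θ β` -/
  F_maps : ∀ α β, α < β → β ≤ κ.ord → ∀ f ∈ F α β,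
      (∀ x, x < θ α → f x < θ β) ∧ ∀ x y, x < y → y < θ α → f x < f y
  /-- (P1) `|F α β| < κ` for `α < β < κ` -/
  F_card : ∀ α β, α < β → β < κ.ord → Cardinal.mk (F α β) < Cardinal.lift.{1} κ
  /-- (P2), one inclusion: compositions of morass maps are morass maps -/
  F_comp_mem : ∀ α β γ, α < β → β < γ → γ ≤ κ.ord → ∀ f ∈ F β γ, ∀ g ∈ F α β,
      ∃ h ∈ F α γ, ∀ x, x < θ α → h x = f (g x)
  /-- (P2), the other inclusion: every morass map factors through any intermediate level -/
  F_comp_factor : ∀ α β γ, α < β → β < γ → γ ≤ κ.ord → ∀ h ∈ F α γ,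
      ∃ f ∈ F β γ, ∃ g ∈ F α β, ∀ x, x < θ α → h x = f (g x)
  /-- (P3) `F α (α+1) = {id ↾ θ α, h_α}` where `h_α ↾ δ = id` and `h_α δ ≥ θ α` -/
  F_succ : ∀ α, α < κ.ord →
      (∃ i ∈ F α (α + 1), ∀ x, x < θ α → i x = x) ∧
      ∃ h ∈ F α (α + 1), (∃ δ, δ < θ α ∧ (∀ x, x < δ → h x = x) ∧ θ α ≤ h δ) ∧
        ∀ f ∈ F α (α + 1), (∀ x, x < θ α → f x = x) ∨ (∀ x, x < θ α → f x = h x)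
  /-- (P4) factoring at limit levels -/
  F_limit : ∀ α, α ≤ κ.ord → Order.IsSuccLimit α → ∀ β₁ β₂, β₁ < α → β₂ < α →
      ∀ f₁ ∈ F β₁ α, ∀ f₂ ∈ F β₂ α, ∃ γ, β₁ < γ ∧ β₂ < γ ∧ γ < α ∧
        ∃ g ∈ F γ α, (∃ j₁ ∈ F β₁ γ, ∀ x, x < θ β₁ → f₁ x = g (j₁ x)) ∧
          ∃ j₂ ∈ F β₂ γ, ∀ x, x < θ β₂ → f₂ x = g (j₂ x)
  /-- (P5) `θ α = ⋃ {f[θ β] : β < α, f ∈ F β α}` for `α > 0` -/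
  F_cover : ∀ α, α ≤ κ.ord → 0 < α → ∀ τ, τ < θ α →
      ∃ β, β < α ∧ ∃ f ∈ F β α, ∃ ν, ν < θ β ∧ f ν = τ

namespace SimplifiedMorass

variable (M : SimplifiedMorass)

/-- The tree `T = {⟨α,ν⟩ : α ≤ κ, ν < θ α}` of the morass. -/
def InTree (t : Ordinal × Ordinal) : Prop := t.1 ≤ M.κ.ord ∧ t.2 < M.θ t.1

/-- The tree relation: `⟨α,ν⟩ ≺ ⟨β,τ⟩` iff `α < β` and `f ν = τ` for some `f ∈ F α β`. -/
def Prec (s t : Ordinal × Ordinal) : Prop :=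
  M.InTree s ∧ M.InTree t ∧ s.1 < t.1 ∧ ∃ f ∈ M.F s.1 t.1, f s.2 = t.2

end SimplifiedMorass

/-- The raw data of an embedding between fake gap-1 morasses: an action `base` on the
ordinals `ζ ≤ θ`, order preserving maps `pmap ζ : φ_ζ → φ_{base ζ}`, and maps
`gmap ζ ξ : G ζ ξ → G (base ζ) (base ξ)`. -/
structure PreEmb : Type 1 where
  base : Ordinal.{0} → Ordinal.{0}
  pmap : Ordinal.{0} → Ordinal.{0} → Ordinal.{0}
  gmap : Ordinal.{0} → Ordinal.{0} → (Ordinal.{0} → Ordinal.{0}) → Ordinal.{0} → Ordinal.{0}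

/-- Composition of (pre-)embeddings: `(f ∘ g) ζ = f (g ζ)`,
`(f ∘ g)_ζ = f_{g ζ} ∘ g_ζ`, `(f ∘ g)_{ζξ} = f_{g ζ, g ξ} ∘ g_{ζξ}`. -/
def compPreEmb (f g : PreEmb) : PreEmb where
  base := fun x => f.base (g.base x)
  pmap := fun ζ x => f.pmap (g.base ζ) (g.pmap ζ x)
  gmap := fun ζ ξ b x => f.gmap (g.base ζ) (g.base ξ) (g.gmap ζ ξ b) x

section Emb

variable (φ : Ordinal → Ordinal) (G : Ordinal → Ordinal → Set (Ordinal → Ordinal))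
  (δ : Ordinal → Ordinal)

/-- Two pre-embeddings agree (as embeddings of the fake gap-1 morass below `θa`). -/
def EmbAgree (θa : Ordinal) (f g : PreEmb) : Prop :=
  (∀ ζ, ζ ≤ θa → f.base ζ = g.base ζ) ∧
  (∀ ζ, ζ ≤ θa → ∀ x, x < φ ζ → f.pmap ζ x = g.pmap ζ x) ∧
  (∀ ζ ξ, ζ < ξ → ξ ≤ θa → ∀ b ∈ G ζ ξ, ∀ x, x < φ ζ → f.gmap ζ ξ b x = g.gmap ζ ξ b x)

/-- `f` is an embedding from the fake gap-1 morass `⟨⟨φ_ζ : ζ ≤ θa⟩, ⟨G ζ ξ⟩⟩` to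
`⟨⟨φ_ζ : ζ ≤ θb⟩, ⟨G ζ ξ⟩⟩` (where `δ ζ` is the splitting point of `G ζ (ζ+1)`). -/
def IsEmb (θa θb : Ordinal) (f : PreEmb) : Prop :=
  -- (1) `base` is order preserving `θa + 1 → θb + 1` with `base θa = θb`
  (∀ x y, x < y → y ≤ θa → f.base x < f.base y) ∧ f.base θa = θb ∧
  -- (2) each `pmap ζ` is an order preserving map `φ ζ → φ (base ζ)`
  (∀ ζ, ζ ≤ θa → (∀ x, x < φ ζ → f.pmap ζ x < φ (f.base ζ)) ∧
    ∀ x y, x < y → y < φ ζ → f.pmap ζ x < f.pmap ζ y) ∧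
  -- (3) `gmap ζ ξ` maps `G ζ ξ` into `G (base ζ) (base ξ)`
  (∀ ζ ξ, ζ < ξ → ξ ≤ θa → ∀ b ∈ G ζ ξ, f.gmap ζ ξ b ∈ G (f.base ζ) (f.base ξ)) ∧
  -- (4) splitting points are preserved
  (∀ ζ, ζ < θa → f.pmap ζ (δ ζ) = δ (f.base ζ)) ∧
  -- (5) `f_{ζη} (c ∘ b) = f_{ξη} c ∘ f_{ζξ} b`
  (∀ ζ ξ η, ζ < ξ → ξ < η → η ≤ θa → ∀ b ∈ G ζ ξ, ∀ c ∈ G ξ η, ∀ cb ∈ G ζ η,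
    (∀ x, x < φ ζ → cb x = c (b x)) →
    ∀ x, x < φ ζ → f.gmap ζ η cb x = f.gmap ξ η c (f.gmap ζ ξ b x)) ∧
  -- (6) `f_ξ ∘ b = f_{ζξ} b ∘ f_ζ`
  (∀ ζ ξ, ζ < ξ → ξ ≤ θa → ∀ b ∈ G ζ ξ, ∀ x, x < φ ζ →
    f.pmap ξ (b x) = f.gmap ζ ξ b (f.pmap ζ x))

/-- A left-branching embedding: identity up to `θa`, with `f_{θa} ∈ G θa θb`. -/
def LeftBranching (θa θb : Ordinal) (f : PreEmb) : Prop :=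
  IsEmb φ G δ θa θb f ∧
  (∀ ζ, ζ < θa → f.base ζ = ζ) ∧
  (∀ ζ, ζ < θa → ∀ x, x < φ ζ → f.pmap ζ x = x) ∧
  (∀ ζ ξ, ζ < ξ → ξ < θa → ∀ b ∈ G ζ ξ, ∀ x, x < φ ζ → f.gmap ζ ξ b x = b x) ∧
  (∃ g ∈ G θa θb, ∀ x, x < φ θa → f.pmap θa x = g x) ∧
  (∀ ζ, ζ < θa → ∀ b ∈ G ζ θa, ∀ x, x < φ ζ → f.gmap ζ θa b x = f.pmap θa (b x))

/-- A right-branching embedding with splitting level `η`. -/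
def RightBranching (θa θb : Ordinal) (f : PreEmb) : Prop :=
  IsEmb φ G δ θa θb f ∧
  ∃ η, η < θa ∧
    (∀ x, x < η → f.base x = x) ∧
    (∀ ζ, η + ζ ≤ θa → f.base (η + ζ) = θa + ζ) ∧
    (∀ ζ, ζ < η → ∀ x, x < φ ζ → f.pmap ζ x = x) ∧
    (∀ ζ ξ, ζ < ξ → ξ < η → ∀ b ∈ G ζ ξ, ∀ x, x < φ ζ → f.gmap ζ ξ b x = b x) ∧
    (∃ g ∈ G η θa, ∀ x, x < φ η → f.pmap η x = g x) ∧
    (∀ ζ ξ, η ≤ ζ → ζ < ξ → ξ ≤ θa → ∀ c ∈ G (f.base ζ) (f.base ξ),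
      ∃ b ∈ G ζ ξ, ∀ x, x < φ ζ → f.gmap ζ ξ b x = c x)

end Emb

/-- A simplified `(κ,2)`-morass (Velleman).  It consists of a simplified `(κ⁺,1)`-morass
`gap1 = ⟨⟨φ_ζ : ζ ≤ κ⁺⟩, ⟨G ζ ξ⟩⟩` (with `φ_ζ < κ` for `ζ < κ` and splitting points `δ`),
ordinals `⟨θ_α : α ≤ κ⟩` and families `F α β` of embeddings between the fake gap-1 morasses
below `θ α` and `θ β`. -/
structure Morass2 : Type 2 where
  κ : Cardinal.{0}
  kappa_reg : κ.IsRegular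
  kappa_unc : Cardinal.aleph0 < κ
  gap1 : SimplifiedMorass
  gap1_kappa : gap1.κ = Order.succ κ
  phi_small : ∀ ζ, ζ < κ.ord → gap1.θ ζ < κ.ord
  δ : Ordinal → Ordinal
  delta_lt : ∀ ζ, ζ < (Order.succ κ).ord → δ ζ < gap1.θ ζ
  delta_spec : ∀ ζ, ζ < (Order.succ κ).ord → ∀ b ∈ gap1.F ζ (ζ + 1),
      ¬(∀ x, x < gap1.θ ζ → b x = x) → (∀ x, x < δ ζ → b x = x) ∧ gap1.θ ζ ≤ b (δ ζ)
  θ : Ordinal → Ordinal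
  theta_pos : ∀ α, α < κ.ord → 0 < θ α
  theta_lt : ∀ α, α < κ.ord → θ α < κ.ord
  theta_top : θ κ.ord = (Order.succ κ).ord
  F : Ordinal → Ordinal → Set PreEmb
  /-- members of `F α β` are embeddings -/
  F_emb : ∀ α β, α < β → β ≤ κ.ord → ∀ f ∈ F α β, IsEmb gap1.θ gap1.F δ (θ α) (θ β) f
  /-- (1) `|F α β| < κ` for `α < β < κ` -/
  F_card : ∀ α β, α < β → β < κ.ord → Cardinal.mk (F α β) < Cardinal.lift.{1} κ
  /-- (2) one inclusion of `F α γ = F β γ ∘ F α β` -/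
  F_comp_mem : ∀ α β γ, α < β → β < γ → γ ≤ κ.ord → ∀ f ∈ F β γ, ∀ g ∈ F α β,
      ∃ h ∈ F α γ, EmbAgree gap1.θ gap1.F (θ α) h (compPreEmb f g)
  /-- (2) the other inclusion -/
  F_comp_factor : ∀ α β γ, α < β → β < γ → γ ≤ κ.ord → ∀ h ∈ F α γ,
      ∃ f ∈ F β γ, ∃ g ∈ F α β, EmbAgree gap1.θ gap1.F (θ α) h (compPreEmb f g)
  /-- (3) `F α (α+1)` is an amalgamation: it contains all left-branching embeddings,
  a unique right-branching embedding, and nothing else -/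
  F_amalg : ∀ α, α < κ.ord →
      (∀ f, LeftBranching gap1.θ gap1.F δ (θ α) (θ (α + 1)) f →
        ∃ f' ∈ F α (α + 1), EmbAgree gap1.θ gap1.F (θ α) f f') ∧
      (∃ h ∈ F α (α + 1), RightBranching gap1.θ gap1.F δ (θ α) (θ (α + 1)) h ∧
        ∀ h' ∈ F α (α + 1), RightBranching gap1.θ gap1.F δ (θ α) (θ (α + 1)) h' →
          EmbAgree gap1.θ gap1.F (θ α) h h') ∧
      (∀ f ∈ F α (α + 1), LeftBranching gap1.θ gap1.F δ (θ α) (θ (α + 1)) f ∨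
        RightBranching gap1.θ gap1.F δ (θ α) (θ (α + 1)) f)
  /-- (4) factoring at limit levels -/
  F_limit : ∀ α, α ≤ κ.ord → Order.IsSuccLimit α → ∀ β₁ β₂, β₁ < α → β₂ < α →
      ∀ f₁ ∈ F β₁ α, ∀ f₂ ∈ F β₂ α, ∃ γ, β₁ < γ ∧ β₂ < γ ∧ γ < α ∧
        ∃ g ∈ F γ α, (∃ j₁ ∈ F β₁ γ, EmbAgree gap1.θ gap1.F (θ β₁) f₁ (compPreEmb g j₁)) ∧
          ∃ j₂ ∈ F β₂ γ, EmbAgree gap1.θ gap1.F (θ β₂) f₂ (compPreEmb g j₂)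
  /-- (5)(a) `θ α = ⋃ {f[θ β] : β < α, f ∈ F β α}` at limits -/
  F_cover_theta : ∀ α, α ≤ κ.ord → Order.IsSuccLimit α → ∀ τ, τ < θ α →
      ∃ β, β < α ∧ ∃ f ∈ F β α, ∃ ν, ν < θ β ∧ f.base ν = τ
  /-- (5)(b) `φ ζ = ⋃ {f_ζ̄ [φ ζ̄] : f ∈ F β α, f ζ̄ = ζ}` at limits -/
  F_cover_phi : ∀ α, α ≤ κ.ord → Order.IsSuccLimit α → ∀ ζ, ζ ≤ θ α → ∀ τ, τ < gap1.θ ζ →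
      ∃ β, β < α ∧ ∃ f ∈ F β α, ∃ ζ', ζ' ≤ θ β ∧ f.base ζ' = ζ ∧
        ∃ x, x < gap1.θ ζ' ∧ f.pmap ζ' x = τ
  /-- (5)(c) `G ζ ξ = ⋃ {f_{ζ̄ξ̄} [G ζ̄ ξ̄] : f ∈ F β α, f ζ̄ = ζ, f ξ̄ = ξ}` at limits -/
  F_cover_G : ∀ α, α ≤ κ.ord → Order.IsSuccLimit α → ∀ ζ ξ, ζ < ξ → ξ ≤ θ α → ∀ b ∈ gap1.F ζ ξ,
      ∃ β, β < α ∧ ∃ f ∈ F β α, ∃ ζ' ξ', ζ' < ξ' ∧ ξ' ≤ θ β ∧ f.base ζ' = ζ ∧ f.base ξ' = ξ ∧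
        ∃ c ∈ gap1.F ζ' ξ', ∀ x, x < gap1.θ ζ' → f.gmap ζ' ξ' c x = b x

/-!
Both parts are instances of one statement about a system of strictly increasing maps
`θ α → θ β` (`α < β ≤ top`) that is closed under composition and factoring, contains an
identity and splits at successor steps, and has amalgamation and covering at limits. By
induction on `β`, every map into level `β` splits (each point of `θ α` is fixed or sent to
`≥ θ α`) and some map into level `β` is the identity on `θ α`.

At a limit `β`, let `x` be the least point moved by `f ∈ F α β`. Amalgamating `f = k ∘ j₁` with a
map `k ∘ j₂` covering `x` shows that `k` fixes `x`, so `j₁` moves `x` and, by induction, sends it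
to `≥ θ α`. The identity on `θ α` is obtained by covering the point `θ α` from a level `η > α`:
the covering map splits and sends a point to `θ α < θ η`, so it fixes all of `θ α`.

For the `(κ,2)`-morass the maps are the actions of the embeddings on levels; the identity at a
successor step is the left-branching embedding through a map of `G (θ α) (θ (α + 1))`, which
exists by part (a).
-/

open Set Order

universe u

theorem StrictMonoOn.le_apply_of_lt {α : Type*} [LinearOrder α] [WellFoundedLT α] {f : α → α}
    {c : α} (hf : StrictMonoOn f (Iio c)) {x : α} (hx : x < c) : x ≤ f x := by
  induction x using WellFoundedLT.induction with
  | _ x ih =>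
    by_contra! h
    exact (ih (f x) h (h.trans hx)).not_gt (hf (h.trans hx) hx h)

theorem StrictMonoOn.eq_or_le_apply {α : Type*} [LinearOrder α] [WellFoundedLT α] {f : α → α}
    {c : α} (hf : StrictMonoOn f (Iio c))
    (hleast : ∀ x < c, (∀ y < x, f y = y) → f x ≠ x → c ≤ f x) :
    ∀ x < c, f x = x ∨ c ≤ f x := by
  intro x
  induction x using WellFoundedLT.induction with
  | _ x ih =>
    intro hx
    by_cases hfix : ∀ y < x, f y = y
    · by_cases hfx : f x = x
      · exact .inl hfx
      · exact .inr (hleast x hx hfix hfx)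
    · push Not at hfix
      obtain ⟨y, hyx, hfy⟩ := hfix
      exact .inr (((ih y hyx (hyx.trans hx)).resolve_left hfy).trans (hf (hyx.trans hx) hx hyx).le)

structure MorassMapSystem (σ : Type u) where
  θ : Ordinal.{0} → Ordinal.{0}
  top : Ordinal.{0}
  Fam : Ordinal.{0} → Ordinal.{0} → Set σ
  ap : σ → Ordinal.{0} → Ordinal.{0}
  theta_pos : ∀ {α}, α ≤ top → 0 < θ α
  mapsTo : ∀ {α β f}, α < β → β ≤ top → f ∈ Fam α β → MapsTo (ap f) (Iio (θ α)) (Iio (θ β))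
  strictMonoOn : ∀ {α β f}, α < β → β ≤ top → f ∈ Fam α β → StrictMonoOn (ap f) (Iio (θ α))
  comp_mem : ∀ {α β γ f g}, α < β → β < γ → γ ≤ top → f ∈ Fam β γ → g ∈ Fam α β →
    ∃ h ∈ Fam α γ, ∀ x < θ α, ap h x = ap f (ap g x)
  comp_factor : ∀ {α β γ h}, α < β → β < γ → γ ≤ top → h ∈ Fam α γ →
    ∃ f ∈ Fam β γ, ∃ g ∈ Fam α β, ∀ x < θ α, ap h x = ap f (ap g x)
  succ_id : ∀ {α}, α < top → ∃ i ∈ Fam α (α + 1), ∀ x < θ α, ap i x = x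
  succ_split : ∀ {α f}, α < top → f ∈ Fam α (α + 1) → ∀ x < θ α, ap f x = x ∨ θ α ≤ ap f x
  theta_lt_succ : ∀ {α}, α < top → θ α < θ (α + 1)
  limit_amalg : ∀ {β α₁ α₂ f₁ f₂}, β ≤ top → IsSuccLimit β → α₁ < β → α₂ < β →
    f₁ ∈ Fam α₁ β → f₂ ∈ Fam α₂ β → ∃ γ, α₁ < γ ∧ α₂ < γ ∧ γ < β ∧ ∃ g ∈ Fam γ β,
      (∃ j₁ ∈ Fam α₁ γ, ∀ x < θ α₁, ap f₁ x = ap g (ap j₁ x)) ∧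
      ∃ j₂ ∈ Fam α₂ γ, ∀ x < θ α₂, ap f₂ x = ap g (ap j₂ x)
  limit_cover : ∀ {β τ}, β ≤ top → IsSuccLimit β → τ < θ β →
    ∃ γ < β, ∃ f ∈ Fam γ β, ∃ ν < θ γ, ap f ν = τ

namespace MorassMapSystem

variable {σ : Type u} (A : MorassMapSystem σ) {α β γ : Ordinal.{0}} {f g : σ}

def IsIdOn (α : Ordinal) (f : σ) : Prop := ∀ x < A.θ α, A.ap f x = x

/-- Equivalently, `f` is the identity below some `δ ≤ θ α` and maps `[δ, θ α)` to `≥ θ α`. -/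
def Splits (α : Ordinal) (f : σ) : Prop := ∀ x < A.θ α, A.ap f x = x ∨ A.θ α ≤ A.ap f x

theorem le_ap (hαβ : α < β) (hβ : β ≤ A.top) (hf : f ∈ A.Fam α β) {x : Ordinal}
    (hx : x < A.θ α) : x ≤ A.ap f x :=
  (A.strictMonoOn hαβ hβ hf).le_apply_of_lt hx

theorem ap_lt (hαβ : α < β) (hβ : β ≤ A.top) (hf : f ∈ A.Fam α β) {x : Ordinal}
    (hx : x < A.θ α) : A.ap f x < A.θ β :=
  A.mapsTo hαβ hβ hf hx

theorem theta_le (hαβ : α < β) (hβ : β ≤ A.top) (hf : f ∈ A.Fam α β) : A.θ α ≤ A.θ β := by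
  by_contra! h
  exact (A.le_ap hαβ hβ hf h).not_gt (A.ap_lt hαβ hβ hf h)

theorem theta_lt (hαβ : α < β) (hβ : β ≤ A.top)
    (hne : α + 1 < β → (A.Fam (α + 1) β).Nonempty) : A.θ α < A.θ β := by
  rcases (add_one_le_of_lt hαβ).eq_or_lt with h | h
  · exact h ▸ A.theta_lt_succ (hαβ.trans_le hβ)
  · obtain ⟨f, hf⟩ := hne h
    exact (A.theta_lt_succ (hαβ.trans_le hβ)).trans_le (A.theta_le h hβ hf)

theorem exists_isIdOn_of_comp (hαβ : α < β) (hβγ : β < γ) (hγ : γ ≤ A.top)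
    (hf : f ∈ A.Fam β γ) (hg : g ∈ A.Fam α β) (hfid : A.IsIdOn α f) (hgid : A.IsIdOn α g) :
    ∃ h ∈ A.Fam α γ, A.IsIdOn α h := by
  obtain ⟨h, hh, hcomp⟩ := A.comp_mem hαβ hβγ hγ hf hg
  exact ⟨h, hh, fun x hx => by rw [hcomp x hx, hgid x hx, hfid x hx]⟩

theorem splits_add_one (hγ : γ < A.top) (ih : ∀ α < γ, ∀ f ∈ A.Fam α γ, A.Splits α f)
    (hα : α < γ + 1) (hf : f ∈ A.Fam α (γ + 1)) : A.Splits α f := by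
  rcases (lt_add_one_iff.1 hα).eq_or_lt with rfl | hαγ
  · exact A.succ_split hγ hf
  obtain ⟨f', hf', g, hg, hfg⟩ :=
    A.comp_factor hαγ (lt_add_one γ) (add_one_le_of_lt hγ) hf
  have hθ := A.theta_le hαγ hγ.le hg
  intro x hx
  rw [hfg x hx]
  rcases ih α hαγ g hg x hx with hgx | hgx
  · rw [hgx]
    exact (A.succ_split hγ hf' x (hx.trans_le hθ)).imp_right hθ.trans
  · exact .inr (hgx.trans (A.le_ap (lt_add_one γ) (add_one_le_of_lt hγ) hf'
      (A.ap_lt hαγ hγ.le hg hx)))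

theorem exists_isIdOn_add_one (hγ : γ < A.top) (ih : ∀ α < γ, ∃ g ∈ A.Fam α γ, A.IsIdOn α g)
    (hα : α < γ + 1) : ∃ g ∈ A.Fam α (γ + 1), A.IsIdOn α g := by
  obtain ⟨i, hi, hiid⟩ := A.succ_id hγ
  rcases (lt_add_one_iff.1 hα).eq_or_lt with rfl | hαγ
  · exact ⟨i, hi, hiid⟩
  obtain ⟨g, hg, hgid⟩ := ih α hαγ
  exact A.exists_isIdOn_of_comp hαγ (lt_add_one γ) (add_one_le_of_lt hγ) hi hg
    (fun x hx => hiid x (hx.trans_le (A.theta_le hαγ hγ.le hg))) hgid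

theorem splits_of_isSuccLimit (hβ : β ≤ A.top) (hlim : IsSuccLimit β)
    (ih : ∀ γ < β, ∀ α < γ, ∀ f ∈ A.Fam α γ, A.Splits α f) (hαβ : α < β)
    (hf : f ∈ A.Fam α β) : A.Splits α f := by
  refine (A.strictMonoOn hαβ hβ hf).eq_or_le_apply fun x hx hfix hmoved => ?_
  obtain ⟨η, hηβ, h, hh, ρ, hρ, hhρ⟩ :=
    A.limit_cover hβ hlim (hx.trans_le (A.theta_le hαβ hβ hf))
  obtain ⟨γ, hαγ, hηγ, hγβ, k, hk, ⟨j₁, hj₁, hf_eq⟩, j₂, hj₂, hh_eq⟩ :=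
    A.limit_amalg hβ hlim hαβ hηβ hf hh
  have hγ : γ ≤ A.top := hγβ.le.trans hβ
  -- all maps are inflationary: `y ≤ j₁ y ≤ k (j₁ y) = f y`
  have hk_fix : ∀ y < x, A.ap k y = y := by
    intro y hy
    have hyα := hy.trans hx
    have hkj : A.ap k (A.ap j₁ y) = y := (hf_eq y hyα).symm.trans (hfix y hy)
    have hj : A.ap j₁ y = y := le_antisymm
      ((A.le_ap hγβ hβ hk (A.ap_lt hαγ hγ hj₁ hyα)).trans_eq hkj) (A.le_ap hαγ hγ hj₁ hyα)
    rwa [hj] at hkj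
  have hkj₂ : A.ap k (A.ap j₂ ρ) = x := (hh_eq ρ hρ).symm.trans hhρ
  have hj₂ : A.ap j₂ ρ = x := by
    refine ((A.le_ap hγβ hβ hk (A.ap_lt hηγ hγ hj₂ hρ)).trans_eq hkj₂).eq_of_not_lt
      fun hlt => hlt.ne ?_
    rwa [hk_fix _ hlt] at hkj₂
  have hkx : A.ap k x = x := by rwa [hj₂] at hkj₂
  have hj₁_moved : A.ap j₁ x ≠ x := fun hj₁x => hmoved (by rw [hf_eq x hx, hj₁x, hkx])
  calc A.θ α ≤ A.ap j₁ x := (ih γ hγβ α hαγ j₁ hj₁ x hx).resolve_left hj₁_moved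
    _ ≤ A.ap k (A.ap j₁ x) := A.le_ap hγβ hβ hk (A.ap_lt hαγ hγ hj₁ hx)
    _ = A.ap f x := (hf_eq x hx).symm

theorem nonempty_fam_of_isSuccLimit (hβ : β ≤ A.top) (hlim : IsSuccLimit β)
    (ih : ∀ γ < β, ∀ α < γ, (A.Fam α γ).Nonempty) (hαβ : α < β) : (A.Fam α β).Nonempty := by
  obtain ⟨γ, hγβ, f, hf, -⟩ := A.limit_cover hβ hlim (A.theta_pos hβ)
  rcases lt_trichotomy α γ with hαγ | rfl | hγα
  · obtain ⟨g, hg⟩ := ih γ hγβ α hαγ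
    obtain ⟨h, hh, -⟩ := A.comp_mem hαγ hγβ hβ hf hg
    exact ⟨h, hh⟩
  · exact ⟨f, hf⟩
  · obtain ⟨f', hf', -⟩ := A.comp_factor hγα hαβ hβ hf
    exact ⟨f', hf'⟩

theorem exists_isIdOn_of_isSuccLimit (hβ : β ≤ A.top) (hlim : IsSuccLimit β)
    (ih : ∀ γ < β, ∀ α < γ, ∃ g ∈ A.Fam α γ, A.IsIdOn α g)
    (hsplit : ∀ α < β, ∀ f ∈ A.Fam α β, A.Splits α f) (hαβ : α < β) :
    ∃ g ∈ A.Fam α β, A.IsIdOn α g := by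
  have hne : ∀ γ < β, ∀ α < γ, (A.Fam α γ).Nonempty := fun γ hγ α hα =>
    (ih γ hγ α hα).imp fun _ h => h.1
  have hθαβ : A.θ α < A.θ β :=
    A.theta_lt hαβ hβ fun h => A.nonempty_fam_of_isSuccLimit hβ hlim hne h
  obtain ⟨η, hαη, hηβ, f, hf, ν, hν, hfν⟩ :
      ∃ η, α < η ∧ η < β ∧ ∃ f ∈ A.Fam η β, ∃ ν < A.θ η, A.ap f ν = A.θ α := by
    obtain ⟨η, hηβ, f, hf, ν, hν, hfν⟩ := A.limit_cover hβ hlim hθαβ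
    rcases lt_or_ge α η with hαη | hηα
    · exact ⟨η, hαη, hηβ, f, hf, ν, hν, hfν⟩
    have hα1 : α + 1 < β := hlim.add_one_lt hαβ
    obtain ⟨f', hf', g, hg, hfg⟩ := A.comp_factor (lt_add_one_iff.2 hηα) hα1 hβ hf
    exact ⟨α + 1, lt_add_one α, hα1, f', hf', A.ap g ν,
      A.ap_lt (lt_add_one_iff.2 hηα) (hα1.le.trans hβ) hg hν, (hfg ν hν).symm.trans hfν⟩
  have hθαη : A.θ α < A.θ η := A.theta_lt hαη (hηβ.le.trans hβ) (hne η hηβ _)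
  have hfix_of_lt : ∀ x < A.θ η, A.ap f x < A.θ η → A.ap f x = x := fun x hx hfx =>
    (hsplit η hηβ f hf x hx).resolve_right hfx.not_ge
  have hν_eq : ν = A.θ α := (hfix_of_lt ν hν (hfν ▸ hθαη)).symm.trans hfν
  have hfid : A.IsIdOn α f := fun x hx => by
    have hxν : x < ν := hν_eq ▸ hx
    refine hfix_of_lt x (hxν.trans hν) ?_
    exact ((A.strictMonoOn hηβ hβ hf) (hxν.trans hν) hν hxν).trans (hfν ▸ hθαη)
  obtain ⟨g, hg, hgid⟩ := ih η hηβ α hαη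
  exact A.exists_isIdOn_of_comp hαη hηβ hβ hf hg hfid hgid

theorem splits_and_exists_isIdOn (hβ : β ≤ A.top) :
    (∀ α < β, ∀ f ∈ A.Fam α β, A.Splits α f) ∧ ∀ α < β, ∃ g ∈ A.Fam α β, A.IsIdOn α g := by
  induction β using WellFoundedLT.induction with
  | _ β ih =>
    rcases Ordinal.zero_or_succ_or_isSuccLimit β with rfl | ⟨γ, rfl⟩ | hlim
    · simp
    · rw [succ_eq_add_one] at hβ ih ⊢
      have hγ : γ < A.top := (lt_add_one γ).trans_le hβ
      obtain ⟨hsplit, hid⟩ := ih γ (lt_add_one γ) hγ.le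
      exact ⟨fun α hα f hf => A.splits_add_one hγ hsplit hα hf,
        fun α hα => A.exists_isIdOn_add_one hγ hid hα⟩
    · have hsplit : ∀ α < β, ∀ f ∈ A.Fam α β, A.Splits α f := fun α hα f hf =>
        A.splits_of_isSuccLimit hβ hlim (fun γ hγ => (ih γ hγ (hγ.le.trans hβ)).1) hα hf
      exact ⟨hsplit, fun α hα => A.exists_isIdOn_of_isSuccLimit hβ hlim
        (fun γ hγ => (ih γ hγ (hγ.le.trans hβ)).2) hsplit hα⟩

end MorassMapSystem

theorem Cardinal.add_one_lt_ord {c : Cardinal} (hc : Cardinal.aleph0 ≤ c) {α : Ordinal}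
    (hα : α < c.ord) : α + 1 < c.ord :=
  (Cardinal.isSuccLimit_ord hc).add_one_lt hα

theorem Cardinal.ord_succ_pos (c : Cardinal) : 0 < (Order.succ c).ord :=
  Cardinal.ord_pos.2 (Cardinal.succ_pos c)

namespace SimplifiedMorass

variable (S : SimplifiedMorass) {α β : Ordinal} {f : Ordinal → Ordinal}

theorem mapsTo_of_mem (hαβ : α < β) (hβ : β ≤ S.κ.ord) (hf : f ∈ S.F α β) :
    MapsTo f (Iio (S.θ α)) (Iio (S.θ β)) :=
  fun x hx => (S.F_maps α β hαβ hβ f hf).1 x hx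

theorem strictMonoOn_of_mem (hαβ : α < β) (hβ : β ≤ S.κ.ord) (hf : f ∈ S.F α β) :
    StrictMonoOn f (Iio (S.θ α)) :=
  fun x _ y hy hxy => (S.F_maps α β hαβ hβ f hf).2 x y hxy hy

theorem theta_lt_succ (hα : α < S.κ.ord) : S.θ α < S.θ (α + 1) := by
  obtain ⟨h, hh, ⟨δ, hδ, -, hle⟩, -⟩ := (S.F_succ α hα).2
  exact hle.trans_lt (S.mapsTo_of_mem (lt_add_one α)
    (Cardinal.add_one_lt_ord S.kappa_reg.aleph0_le hα).le hh hδ)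

theorem succ_split (hα : α < S.κ.ord) (hf : f ∈ S.F α (α + 1)) :
    ∀ x < S.θ α, f x = x ∨ S.θ α ≤ f x := by
  obtain ⟨h, hh, ⟨δ, hδ, hid, hle⟩, hcases⟩ := (S.F_succ α hα).2
  intro x hx
  rcases hcases f hf with hfid | hfh
  · exact .inl (hfid x hx)
  rw [hfh x hx]
  rcases lt_or_ge x δ with hxδ | hδx
  · exact .inl (hid x hxδ)
  · exact .inr (hle.trans ((S.strictMonoOn_of_mem (lt_add_one α)
      (Cardinal.add_one_lt_ord S.kappa_reg.aleph0_le hα).le hh).monotoneOn hδ hx hδx))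

def toMorassMapSystem : MorassMapSystem (Ordinal.{0} → Ordinal.{0}) where
  θ := S.θ
  top := S.κ.ord
  Fam := S.F
  ap := id
  theta_pos {α} hα := by
    rcases hα.eq_or_lt with rfl | hα
    · exact S.theta_top ▸ Cardinal.ord_succ_pos S.κ
    · exact S.theta_pos α hα
  mapsTo := S.mapsTo_of_mem
  strictMonoOn := S.strictMonoOn_of_mem
  comp_mem hαβ hβγ hγ hf hg := S.F_comp_mem _ _ _ hαβ hβγ hγ _ hf _ hg
  comp_factor hαβ hβγ hγ hh := S.F_comp_factor _ _ _ hαβ hβγ hγ _ hh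
  succ_id hα := (S.F_succ _ hα).1
  succ_split := S.succ_split
  theta_lt_succ := S.theta_lt_succ
  limit_amalg hβ hlim h₁ h₂ hf₁ hf₂ := S.F_limit _ hβ hlim _ _ h₁ h₂ _ hf₁ _ hf₂
  limit_cover hβ hlim hτ := S.F_cover _ hβ hlim.bot_lt _ hτ

theorem exists_id_mem {ζ ξ : Ordinal} (hζξ : ζ < ξ) (hξ : ξ ≤ S.κ.ord) :
    ∃ g ∈ S.F ζ ξ, ∀ x < S.θ ζ, g x = x :=
  (S.toMorassMapSystem.splits_and_exists_isIdOn hξ).2 ζ hζξ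

end SimplifiedMorass

section Embeddings

variable {φ : Ordinal → Ordinal} {G : Ordinal → Ordinal → Set (Ordinal → Ordinal)}
  {δ : Ordinal → Ordinal} {θa θb : Ordinal} {f : PreEmb}

theorem IsEmb.mapsTo_base (hf : IsEmb φ G δ θa θb f) : MapsTo f.base (Iio θa) (Iio θb) :=
  fun x hx => hf.2.1 ▸ hf.1 x θa hx le_rfl

theorem IsEmb.strictMonoOn_base (hf : IsEmb φ G δ θa θb f) : StrictMonoOn f.base (Iio θa) :=
  fun x _ y hy hxy => hf.1 x y hxy (le_of_lt hy)

theorem RightBranching.exists_base_eq (hf : RightBranching φ G δ θa θb f) :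
    ∃ η < θa, f.base η = θa ∧ ∀ x < η, f.base x = x := by
  obtain ⟨-, η, hη, hid, hshift, -⟩ := hf
  exact ⟨η, hη, by simpa using hshift 0 (by simpa using hη.le), hid⟩

theorem RightBranching.theta_lt (hf : RightBranching φ G δ θa θb f) : θa < θb := by
  obtain ⟨η, hη, hbη, -⟩ := hf.exists_base_eq
  exact hbη ▸ hf.1.2.1 ▸ hf.1.1 η θa hη le_rfl

theorem RightBranching.base_eq_or_le (hf : RightBranching φ G δ θa θb f) :
    ∀ x < θa, f.base x = x ∨ θa ≤ f.base x := by
  obtain ⟨η, hη, hbη, hid⟩ := hf.exists_base_eq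
  intro x hx
  rcases lt_or_ge x η with hxη | hηx
  · exact .inl (hid x hxη)
  · exact .inr (hbη ▸ hf.1.strictMonoOn_base.monotoneOn hη hx hηx)

/-- `gc ζ b` is to be a member of `G ζ θb` agreeing with `g ∘ b` on `φ ζ`. -/
def leftBranchingPreEmb (θa θb : Ordinal) (g : Ordinal → Ordinal)
    (gc : Ordinal → (Ordinal → Ordinal) → Ordinal → Ordinal) : PreEmb where
  base ζ := if ζ < θa then ζ else θb
  pmap ζ x := if ζ < θa then x else g x
  gmap ζ ξ b x := if ξ < θa then b x else gc ζ b x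

variable {g : Ordinal → Ordinal} {gc : Ordinal → (Ordinal → Ordinal) → Ordinal → Ordinal}

theorem isEmb_leftBranchingPreEmb (hθ : θa < θb)
    (hG : ∀ ζ ξ, ζ < ξ → ξ ≤ θa → ∀ b ∈ G ζ ξ, MapsTo b (Iio (φ ζ)) (Iio (φ ξ)))
    (hgmaps : MapsTo g (Iio (φ θa)) (Iio (φ θb))) (hgmono : StrictMonoOn g (Iio (φ θa)))
    (hgc : ∀ ζ < θa, ∀ b ∈ G ζ θa, gc ζ b ∈ G ζ θb ∧ ∀ x < φ ζ, gc ζ b x = g (b x)) :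
    IsEmb φ G δ θa θb (leftBranchingPreEmb θa θb g gc) := by
  refine ⟨?_, if_neg (lt_irrefl θa), ?_, ?_, ?_, ?_, ?_⟩
  · intro x y hxy hy
    rcases hy.eq_or_lt with rfl | hy
    · simp [leftBranchingPreEmb, hxy, hxy.trans hθ]
    · simp [leftBranchingPreEmb, hxy.trans hy, hy, hxy]
  · intro ζ hζ
    rcases hζ.eq_or_lt with rfl | hζ
    · simpa [leftBranchingPreEmb] using
        ⟨hgmaps, fun x y hxy hy => hgmono (hxy.trans hy) hy hxy⟩
    · simpa [leftBranchingPreEmb, hζ] using fun x y hxy _ => hxy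
  · intro ζ ξ hζξ hξ b hb
    rcases hξ.eq_or_lt with rfl | hξ
    · simpa [leftBranchingPreEmb, hζξ] using (hgc ζ hζξ b hb).1
    · simpa [leftBranchingPreEmb, hζξ.trans hξ, hξ] using hb
  · intro ζ hζ
    simp [leftBranchingPreEmb, hζ]
  · intro ζ ξ η hζξ hξη hη b hb c hc cb _ hcb x hx
    rcases hη.eq_or_lt with rfl | hη
    · have hbx : b x < φ ξ := hG ζ ξ hζξ hξη.le b hb hx
      simp [leftBranchingPreEmb, hξη, (hgc ζ (hζξ.trans hξη) cb ‹_›).2 x hx,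
        (hgc ξ hξη c hc).2 _ hbx, hcb x hx]
    · simp [leftBranchingPreEmb, hη, hξη.trans hη, hcb x hx]
  · intro ζ ξ hζξ hξ b hb x hx
    rcases hξ.eq_or_lt with rfl | hξ
    · simp [leftBranchingPreEmb, hζξ, (hgc ζ hζξ b hb).2 x hx]
    · simp [leftBranchingPreEmb, hξ, hζξ.trans hξ]

theorem exists_leftBranching (δ : Ordinal → Ordinal) (hθ : θa < θb)
    (hG : ∀ ζ ξ, ζ < ξ → ξ ≤ θa → ∀ b ∈ G ζ ξ, MapsTo b (Iio (φ ζ)) (Iio (φ ξ)))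
    (hg : g ∈ G θa θb) (hgmaps : MapsTo g (Iio (φ θa)) (Iio (φ θb)))
    (hgmono : StrictMonoOn g (Iio (φ θa)))
    (hcomp : ∀ ζ < θa, ∀ b ∈ G ζ θa, ∃ c ∈ G ζ θb, ∀ x < φ ζ, c x = g (b x)) :
    ∃ f, LeftBranching φ G δ θa θb f := by
  have hcomp' : ∀ ζ (b : Ordinal → Ordinal), ∃ c, ζ < θa → b ∈ G ζ θa →
      c ∈ G ζ θb ∧ ∀ x < φ ζ, c x = g (b x) := by
    intro ζ b
    by_cases h : ζ < θa ∧ b ∈ G ζ θa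
    · obtain ⟨c, hc, hcb⟩ := hcomp ζ h.1 b h.2
      exact ⟨c, fun _ _ => ⟨hc, hcb⟩⟩
    · exact ⟨b, fun h₁ h₂ => (h ⟨h₁, h₂⟩).elim⟩
  choose gc hgc using hcomp'
  have hgc' : ∀ ζ < θa, ∀ b ∈ G ζ θa, gc ζ b ∈ G ζ θb ∧ ∀ x < φ ζ, gc ζ b x = g (b x) :=
    fun ζ hζ b hb => hgc ζ b hζ hb
  refine ⟨leftBranchingPreEmb θa θb g gc,
    isEmb_leftBranchingPreEmb hθ hG hgmaps hgmono hgc', ?_, ?_, ?_, ⟨g, hg, ?_⟩, ?_⟩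
  · intro ζ hζ
    simp [leftBranchingPreEmb, hζ]
  · intro ζ hζ x _
    simp [leftBranchingPreEmb, hζ]
  · intro ζ ξ _ hξ b _ x _
    simp [leftBranchingPreEmb, hξ]
  · intro x _
    simp [leftBranchingPreEmb]
  · intro ζ hζ b hb x hx
    simp [leftBranchingPreEmb, (hgc' ζ hζ b hb).2 x hx]

end Embeddings

namespace Morass2

variable (M : Morass2) {α : Ordinal}

theorem theta_lt_succ (hα : α < M.κ.ord) : M.θ α < M.θ (α + 1) :=
  let ⟨_, _, hR, _⟩ := (M.F_amalg α hα).2.1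
  hR.theta_lt

theorem exists_mem_F_add_one_base_eq_self (hα : α < M.κ.ord) :
    ∃ i ∈ M.F α (α + 1), ∀ x < M.θ α, i.base x = x := by
  have hθ := M.theta_lt_succ hα
  have hθ_top : M.θ (α + 1) ≤ M.gap1.κ.ord := by
    rw [M.gap1_kappa]
    exact (M.theta_lt _ (Cardinal.add_one_lt_ord M.kappa_reg.aleph0_le hα)).le.trans
      (Cardinal.ord_le_ord.2 (le_succ _))
  obtain ⟨g, hg, -⟩ := M.gap1.exists_id_mem hθ hθ_top
  obtain ⟨f, hf⟩ := exists_leftBranching M.δ hθ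
    (fun ζ ξ hζξ hξ b hb => M.gap1.mapsTo_of_mem hζξ (hξ.trans (hθ.le.trans hθ_top)) hb) hg
    (M.gap1.mapsTo_of_mem hθ hθ_top hg) (M.gap1.strictMonoOn_of_mem hθ hθ_top hg)
    (fun ζ hζ b hb => M.gap1.F_comp_mem _ _ _ hζ hθ hθ_top g hg b hb)
  obtain ⟨f', hf', hagree⟩ := (M.F_amalg α hα).1 f hf
  exact ⟨f', hf', fun x hx => (hagree.1 x hx.le).symm.trans (hf.2.1 x hx)⟩

def toMorassMapSystem : MorassMapSystem PreEmb where
  θ := M.θ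
  top := M.κ.ord
  Fam := M.F
  ap := PreEmb.base
  theta_pos {α} hα := by
    rcases hα.eq_or_lt with rfl | hα
    · exact M.theta_top ▸ Cardinal.ord_succ_pos M.κ
    · exact M.theta_pos α hα
  mapsTo hαβ hβ hf := (M.F_emb _ _ hαβ hβ _ hf).mapsTo_base
  strictMonoOn hαβ hβ hf := (M.F_emb _ _ hαβ hβ _ hf).strictMonoOn_base
  comp_mem hαβ hβγ hγ hf hg :=
    let ⟨h, hh, hagree⟩ := M.F_comp_mem _ _ _ hαβ hβγ hγ _ hf _ hg
    ⟨h, hh, fun x hx => hagree.1 x hx.le⟩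
  comp_factor hαβ hβγ hγ hh :=
    let ⟨f, hf, g, hg, hagree⟩ := M.F_comp_factor _ _ _ hαβ hβγ hγ _ hh
    ⟨f, hf, g, hg, fun x hx => hagree.1 x hx.le⟩
  succ_id := M.exists_mem_F_add_one_base_eq_self
  succ_split hα hf := ((M.F_amalg _ hα).2.2 _ hf).elim (fun hL x hx => .inl (hL.2.1 x hx))
    RightBranching.base_eq_or_le
  theta_lt_succ := M.theta_lt_succ
  limit_amalg hβ hlim h₁ h₂ hf₁ hf₂ := by
    obtain ⟨γ, hγ₁, hγ₂, hγβ, g, hg, ⟨j₁, hj₁, hagree₁⟩, j₂, hj₂, hagree₂⟩ :=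
      M.F_limit _ hβ hlim _ _ h₁ h₂ _ hf₁ _ hf₂
    exact ⟨γ, hγ₁, hγ₂, hγβ, g, hg, ⟨j₁, hj₁, fun x hx => hagree₁.1 x hx.le⟩,
      j₂, hj₂, fun x hx => hagree₂.1 x hx.le⟩
  limit_cover hβ hlim hτ := M.F_cover_theta _ hβ hlim _ hτ

end Morass2

/-- Lemma 2.5 of the paper: (a) for `ζ < ξ ≤ κ⁺` the identity `id ↾ φ ζ` belongs to
`G ζ ξ`; (b) for `α < β ≤ κ` there is an embedding `g ∈ F α β` with `g ↾ θ α = id`. -/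
theorem morass2_identity_maps (M : Morass2) :
    (∀ ζ ξ, ζ < ξ → ξ ≤ (Order.succ M.κ).ord →
      ∃ g ∈ M.gap1.F ζ ξ, ∀ x, x < M.gap1.θ ζ → g x = x) ∧
    (∀ α β, α < β → β ≤ M.κ.ord →
      ∃ g ∈ M.F α β, ∀ x, x < M.θ α → g.base x = x) := by
  exact ⟨fun ζ ξ hζξ hξ => M.gap1.exists_id_mem hζξ (M.gap1_kappa ▸ hξ),
    fun α β hαβ hβ => (M.toMorassMapSystem.splits_and_exists_isIdOn hβ).2 α hαβ⟩
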